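/- If x_0 x_1 ... x_k is a path in a tree T and x_0 has minimum status among all vertices of T, then s(x_1) < s(x_2) < ... < s(x_k). -/
import Mathlib

open SimpleGraph Finset

/-- In a tree, any path realizes the distance. -/
lemma tree_path_length_eq_dist {V : Type*} {G : SimpleGraph V} (hT : G.IsTree)
    {u v : V} (p : G.Walk u v) (hp : p.IsPath) : p.length = G.dist u v := by
  obtain ⟨q, hq, hlen⟩ := hT.isConnected.exists_path_of_dist u v
  obtain ⟨r, hr, hur⟩ := hT.existsUnique_path u v
  rw [hur p hp, hur q hq] at *
  exact hlen

/-- Across an edge of a tree, distances to any vertex differ by exactly one. -/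
lemma tree_dist_step {V : Type*} {G : SimpleGraph V} (hT : G.IsTree)
    {a b : V} (hab : G.Adj a b) (u : V) :
    G.dist b u = G.dist a u + 1 ∨ G.dist a u = G.dist b u + 1 := by
  classical
  obtain ⟨p, hp, hlen⟩ := hT.isConnected.exists_path_of_dist a u
  by_cases hb : b ∈ p.support
  · right
    have hspec := p.take_spec hb
    have hlen2 : (p.takeUntil b hb).length + (p.dropUntil b hb).length = p.length := by
      rw [← SimpleGraph.Walk.length_append, hspec]
    have h1 : G.dist a b ≤ (p.takeUntil b hb).length := SimpleGraph.dist_le _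
    have h2 : G.dist b u ≤ (p.dropUntil b hb).length := SimpleGraph.dist_le _
    have hab1 : G.dist a b = 1 := SimpleGraph.dist_eq_one_iff_adj.mpr hab
    have htri : G.dist a u ≤ G.dist a b + G.dist b u := hT.isConnected.dist_triangle
    omega
  · left
    have hpath : (p.cons hab.symm).IsPath := hp.cons hb
    have := tree_path_length_eq_dist hT _ hpath
    simp only [SimpleGraph.Walk.length_cons] at this
    omega

/-- In a tree, the neighbor of `b` that is closer to `u` is unique. -/
lemma tree_pred_unique {V : Type*} {G : SimpleGraph V} (hT : G.IsTree)
    {a b c u : V} (hba : G.Adj b a) (hbc : G.Adj b c)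
    (ha : G.dist a u + 1 = G.dist b u) (hc : G.dist c u + 1 = G.dist b u) :
    a = c := by
  classical
  obtain ⟨q, hq, hqlen⟩ := hT.isConnected.exists_path_of_dist a u
  obtain ⟨r, hr, hrlen⟩ := hT.isConnected.exists_path_of_dist c u
  have hbq : b ∉ q.support := by
    intro hb
    have hspec : (q.takeUntil b hb).length + (q.dropUntil b hb).length = q.length := by
      rw [← SimpleGraph.Walk.length_append, q.take_spec hb]
    have h1 : G.dist a b ≤ (q.takeUntil b hb).length := SimpleGraph.dist_le _
    have h2 : G.dist b u ≤ (q.dropUntil b hb).length := SimpleGraph.dist_le _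
    have hab1 : G.dist a b = 1 := SimpleGraph.dist_eq_one_iff_adj.mpr hba.symm
    omega
  have hbr : b ∉ r.support := by
    intro hb
    have hspec : (r.takeUntil b hb).length + (r.dropUntil b hb).length = r.length := by
      rw [← SimpleGraph.Walk.length_append, r.take_spec hb]
    have h1 : G.dist c b ≤ (r.takeUntil b hb).length := SimpleGraph.dist_le _
    have h2 : G.dist b u ≤ (r.dropUntil b hb).length := SimpleGraph.dist_le _
    have hab1 : G.dist c b = 1 := SimpleGraph.dist_eq_one_iff_adj.mpr hbc.symm
    omega
  have hP1 : (q.cons hba).IsPath := hq.cons hbq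
  have hP2 : (r.cons hbc).IsPath := hr.cons hbr
  obtain ⟨w, hw, huw⟩ := hT.existsUnique_path b u
  have heq : q.cons hba = r.cons hbc := by rw [huw _ hP1, huw _ hP2]
  have h1 : (q.cons hba).getVert 1 = a := by
    rw [SimpleGraph.Walk.getVert_cons_succ, SimpleGraph.Walk.getVert_zero]
  have h2 : (r.cons hbc).getVert 1 = c := by
    rw [SimpleGraph.Walk.getVert_cons_succ, SimpleGraph.Walk.getVert_zero]
  rw [← h1, ← h2, heq]

/-- Status change across an edge of a tree. -/
lemma status_step {V : Type*} [Fintype V] {G : SimpleGraph V} (hT : G.IsTree)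
    {a b : V} (hab : G.Adj a b) [DecidablePred fun u => G.dist b u < G.dist a u] :
    (∑ u, G.dist b u) +
        2 * (Finset.univ.filter (fun u => G.dist b u < G.dist a u)).card
      = (∑ u, G.dist a u) + Fintype.card V := by
  classical
  have key : ∀ u, G.dist b u + (if G.dist b u < G.dist a u then 1 else 0)
      = G.dist a u + (if ¬ G.dist b u < G.dist a u then 1 else 0) := by
    intro u
    rcases tree_dist_step hT hab u with h | h <;> split_ifs <;> omega
  have hsum : (∑ u, G.dist b u) +
      (Finset.univ.filter (fun u => G.dist b u < G.dist a u)).card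
      = (∑ u, G.dist a u) +
        (Finset.univ.filter (fun u => ¬ G.dist b u < G.dist a u)).card := by
    rw [Finset.card_filter, Finset.card_filter, ← Finset.sum_add_distrib,
      ← Finset.sum_add_distrib]
    exact Finset.sum_congr rfl fun u _ => key u
  have hcomp := Finset.card_filter_add_card_filter_not
    (s := (Finset.univ : Finset V)) (p := fun u => G.dist b u < G.dist a u)
  simp only [Finset.card_univ] at hcomp
  omega

/-- If x_0 x_1 ... x_k is a path in a tree and x_0 has minimum status among all
vertices, then s(x_1) < s(x_2) < ... < s(x_k). -/
theorem stmt_4 {V : Type*} [Fintype V] (G : SimpleGraph V) (hT : G.IsTree)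
    (k : ℕ) (x : ℕ → V)
    (hadj : ∀ i, i < k → G.Adj (x i) (x (i + 1)))
    (hinj : ∀ i j, i ≤ k → j ≤ k → x i = x j → i = j)
    (hmin : ∀ v, (∑ u, G.dist (x 0) u) ≤ ∑ u, G.dist v u) :
    ∀ j, 1 ≤ j → j + 1 ≤ k →
      (∑ u, G.dist (x j) u) < ∑ u, G.dist (x (j + 1)) u := by
  classical
  intro j hj1 hjk
  set n := Fintype.card V with hn
  -- the "branch" sets
  set B : ℕ → Finset V :=
    fun i => Finset.univ.filter (fun u => G.dist (x (i+1)) u < G.dist (x i) u) with hB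
  -- status step for each edge
  have hstep : ∀ i, i < k →
      (∑ u, G.dist (x (i+1)) u) + 2 * (B i).card = (∑ u, G.dist (x i) u) + n := by
    intro i hi
    exact status_step hT (hadj i hi)
  -- strict nesting
  have hnest : ∀ i, i + 2 ≤ k → (B (i+1)).card + 1 ≤ (B i).card := by
    intro i hi
    have hne : x i ≠ x (i+1+1) := fun h => by
      have := hinj i (i+1+1) (by omega) (by omega) h; omega
    have hsub : B (i+1) ⊆ B i := by
      intro u hu
      have hu' : G.dist (x (i+1+1)) u < G.dist (x (i+1)) u := by
        simpa only [hB, Finset.mem_filter, Finset.mem_univ, true_and] using hu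
      have hgoal : G.dist (x (i+1)) u < G.dist (x i) u := by
        rcases tree_dist_step hT (hadj i (by omega)) u with h | h
        · exfalso
          rcases tree_dist_step hT (hadj (i+1) (by omega)) u with h2 | h2
          · omega
          · exact hne (tree_pred_unique (u := u) hT (hadj i (by omega)).symm
              (hadj (i+1) (by omega)) (by omega) (by omega))
        · omega
      simp only [hB, Finset.mem_filter, Finset.mem_univ, true_and]
      exact hgoal
    have hmem : x (i+1) ∈ B i := by
      simp only [hB, Finset.mem_filter, Finset.mem_univ, true_and]
      have : G.dist (x (i+1)) (x (i+1)) = 0 := by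
        rw [hT.isConnected.dist_eq_zero_iff]
      have h1 : G.dist (x i) (x (i+1)) = 1 :=
        SimpleGraph.dist_eq_one_iff_adj.mpr (hadj i (by omega))
      omega
    have hnmem : x (i+1) ∉ B (i+1) := by
      simp only [hB, Finset.mem_filter, Finset.mem_univ, true_and]
      intro hlt
      have : G.dist (x (i+1)) (x (i+1)) = 0 := by
        rw [hT.isConnected.dist_eq_zero_iff]
      omega
    have : B (i+1) ⊂ B i := ⟨hsub, fun h => hnmem (h hmem)⟩
    have := Finset.card_lt_card this
    omega
  -- from minimality: 2 * |B 0| ≤ n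
  have h0 : 2 * (B 0).card ≤ n := by
    have h1 := hstep 0 (by omega)
    norm_num at h1
    have h2 := hmin (x 1)
    omega
  -- induction: |B j| + j ≤ |B 0|
  have hind : ∀ i, i + 1 ≤ k → (B i).card + i ≤ (B 0).card := by
    intro i
    induction i with
    | zero => intro _; omega
    | succ m ih =>
      intro hm
      have h1 := ih (by omega)
      have h2 := hnest m (by omega)
      omega
  have hBj := hind j hjk
  have hs := hstep j (by omega)
  omega
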